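/- The remainder protocol P_rmd satisfies StrongConsensus. -/

import Mathlib

/-! Formalization of population protocols (Angluin et al.), following
"Towards Efficient Verification of Population Protocols". -/

namespace PopProt

/-- A transition `(p, q) ↦ (p', q')`. -/
abbrev PTrans (Q : Type*) := Q × Q × Q × Q

variable {Q : Type*} [Fintype Q] [DecidableEq Q]

/-- `pre t` is the multiset of the two states consumed by transition `t`. -/
def pre (t : PTrans Q) : Multiset Q := {t.1, t.2.1}

/-- `post t` is the multiset of the two states produced by transition `t`. -/
def post (t : PTrans Q) : Multiset Q := {t.2.2.1, t.2.2.2}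

/-- A transition is silent if it cannot change the current configuration. -/
def SilentT (t : PTrans Q) : Prop := pre t = post t

instance : DecidablePred (SilentT (Q := Q)) := fun t => by
  unfold SilentT; infer_instance

/-- Transitions of the form `(p, q) ↦ (p, q)`. -/
def IsSilentPair (t : PTrans Q) : Prop := ∃ p q : Q, t = (p, q, p, q)

instance : DecidablePred (IsSilentPair (Q := Q)) := fun t => by
  unfold IsSilentPair; infer_instance

/-- A population protocol with states `Q` and input alphabet `A`.
Configurations are multisets over `Q` of cardinality at least 2. -/
structure Protocol (Q A : Type*) [Fintype Q] [DecidableEq Q] [Fintype A] where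
  T : Finset (PTrans Q)
  total : ∀ p q : Q, ∃ p' q' : Q, (p, q, p', q') ∈ T
  inp : A → Q
  out : Q → Bool

/-- `C →t C'`. -/
def StepBy (t : PTrans Q) (C C' : Multiset Q) : Prop :=
  pre t ≤ C ∧ C' = C - pre t + post t

/-- One step of the protocol with transition set `T`. -/
def Step (T : Finset (PTrans Q)) (C C' : Multiset Q) : Prop :=
  ∃ t ∈ T, StepBy t C C'

/-- Reachability `C →* C'`. -/
def Reach (T : Finset (PTrans Q)) : Multiset Q → Multiset Q → Prop :=
  Relation.ReflTransGen (Step T)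

/-- `C →w C'` for a finite sequence `w` of transitions. -/
def SeqStep (T : Finset (PTrans Q)) : List (PTrans Q) → Multiset Q → Multiset Q → Prop
  | [], C, C' => C' = C
  | t :: w, C, C' => t ∈ T ∧ ∃ D, StepBy t C D ∧ SeqStep T w D C'

/-- An execution: an infinite sequence of configurations related by steps. -/
def IsExec (T : Finset (PTrans Q)) (e : ℕ → Multiset Q) : Prop :=
  2 ≤ Multiset.card (e 0) ∧ ∀ i, Step T (e i) (e (i + 1))

/-- Fairness: if a step `C → C'` is possible and `C` occurs infinitely often,
then the step is taken infinitely often. -/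
def Fair (T : Finset (PTrans Q)) (e : ℕ → Multiset Q) : Prop :=
  ∀ C C' : Multiset Q, Step T C C' →
    {i | e i = C}.Infinite → {j | e j = C ∧ e (j + 1) = C'}.Infinite

/-- An execution is silent if it is eventually constant. -/
def SilentExec (e : ℕ → Multiset Q) : Prop := ∃ n : ℕ, ∀ i ≥ n, e i = e n

/-- A configuration is terminal if every transition enabled at it is silent. -/
def Terminal (T : Finset (PTrans Q)) (C : Multiset Q) : Prop :=
  ∀ t ∈ T, pre t ≤ C → SilentT t

/-- `C` is a consensus configuration with output `b`. -/
def Consensus (out : Q → Bool) (C : Multiset Q) (b : Bool) : Prop :=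
  ∀ q ∈ C, out q = b

/-- An execution stabilizes to `b`. -/
def Stabilizes (out : Q → Bool) (e : ℕ → Multiset Q) (b : Bool) : Prop :=
  ∃ n : ℕ, ∀ i ≥ n, Consensus out (e i) b

variable {A : Type*} [Fintype A]

/-- The initial configuration determined by input `X`. -/
def init (P : Protocol Q A) (X : Multiset A) : Multiset Q := X.map P.inp

/-- A protocol is silent if every fair execution from every configuration is silent. -/
def IsSilentProtocol (P : Protocol Q A) : Prop :=
  ∀ e : ℕ → Multiset Q, IsExec P.T e → Fair P.T e → SilentExec e

/-- A protocol is well-specified if for every input every fair execution from the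
corresponding initial configuration stabilizes to a common boolean value. -/
def WellSpecified (P : Protocol Q A) : Prop :=
  ∀ X : Multiset A, 2 ≤ Multiset.card X → ∃ b : Bool,
    ∀ e : ℕ → Multiset Q, e 0 = init P X → (∀ i, Step P.T (e i) (e (i + 1))) →
      Fair P.T e → Stabilizes P.out e b

/-- A protocol computes the predicate `φ`. -/
def Computes (P : Protocol Q A) (φ : Multiset A → Bool) : Prop :=
  ∀ X : Multiset A, 2 ≤ Multiset.card X →
    ∀ e : ℕ → Multiset Q, e 0 = init P X → (∀ i, Step P.T (e i) (e (i + 1))) →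
      Fair P.T e → Stabilizes P.out e (φ X)

/-- Termination: from every configuration some terminal configuration is reachable. -/
def Termination (P : Protocol Q A) : Prop :=
  ∀ C : Multiset Q, 2 ≤ Multiset.card C →
    ∃ C' : Multiset Q, Reach P.T C C' ∧ Terminal P.T C'

/-- NoSplitTerminal: all terminal configurations reachable from an initial configuration
are consensus configurations with one common output. -/
def NoSplitTerminal (P : Protocol Q A) : Prop :=
  ∀ X : Multiset A, 2 ≤ Multiset.card X → ∃ b : Bool,
    ∀ C' : Multiset Q, Reach P.T (init P X) C' → Terminal P.T C' →
      Consensus P.out C' b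

/-- All transitions of the form `(p, q) ↦ (p, q)`. -/
def silents (Q : Type*) [Fintype Q] [DecidableEq Q] : Finset (PTrans Q) :=
  Finset.univ.image fun pq : Q × Q => (pq.1, pq.2, pq.1, pq.2)

/-- The transition set of the induced protocol `P[S]`. -/
def induced (S : Finset (PTrans Q)) : Finset (PTrans Q) := S ∪ silents Q

/-- `(Ts 0, …, Ts (n-1))` is an ordered partition witnessing LayeredTermination. -/
def LayeredWitness (P : Protocol Q A) (n : ℕ) (Ts : Fin n → Finset (PTrans Q)) : Prop :=
  (∀ i, (Ts i).Nonempty) ∧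
  (∀ i j, i ≠ j → Disjoint (Ts i) (Ts j)) ∧
  Finset.univ.biUnion Ts = P.T ∧
  ∀ i : Fin n,
    (∀ e : ℕ → Multiset Q, IsExec (induced (Ts i)) e → SilentExec e) ∧
    (∀ C C' : Multiset Q, 2 ≤ Multiset.card C →
      Reach (induced (Ts i)) C C' →
      Terminal (induced ((Finset.univ.filter fun j => j < i).biUnion Ts)) C →
      Terminal (induced ((Finset.univ.filter fun j => j < i).biUnion Ts)) C')

/-- LayeredTermination. -/
def LayeredTermination (P : Protocol Q A) : Prop :=
  ∃ (n : ℕ) (Ts : Fin n → Finset (PTrans Q)), LayeredWitness P n Ts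

/-- `•R`, relative to the transition set `T`. -/
def preSetOf (T : Finset (PTrans Q)) (R : Finset Q) : Finset (PTrans Q) :=
  T.filter fun t => ∃ q ∈ R, q ∈ post t

/-- `R•`, relative to the transition set `T`. -/
def postSetOf (T : Finset (PTrans Q)) (R : Finset Q) : Finset (PTrans Q) :=
  T.filter fun t => ∃ q ∈ R, q ∈ pre t

/-- `R` is a `U`-trap: `R• ∩ U ⊆ •R`. -/
def IsTrap (T U : Finset (PTrans Q)) (R : Finset Q) : Prop :=
  postSetOf T R ∩ U ⊆ preSetOf T R

/-- `R` is a `U`-siphon: `•R ∩ U ⊆ R•`. -/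
def IsSiphon (T U : Finset (PTrans Q)) (R : Finset Q) : Prop :=
  preSetOf T R ∩ U ⊆ postSetOf T R

/-- The flow equations for `(C, C', x)`. -/
def FlowEq (T : Finset (PTrans Q)) (C C' : Multiset Q) (x : PTrans Q → ℕ) : Prop :=
  ∀ q : Q, (C'.count q : ℤ) =
    (C.count q : ℤ) + ∑ t ∈ T, (x t : ℤ) * (((post t).count q : ℤ) - ((pre t).count q : ℤ))

/-- The support of `x` within `T`. -/
def suppIn (T : Finset (PTrans Q)) (x : PTrans Q → ℕ) : Finset (PTrans Q) :=
  T.filter fun t => x t ≠ 0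

/-- Potential reachability `C ⇒ₓ C'` (flow equations plus trap and siphon constraints,
with `U = supp x`). -/
def PotReach (T : Finset (PTrans Q)) (C C' : Multiset Q) (x : PTrans Q → ℕ) : Prop :=
  FlowEq T C C' x ∧
  (∀ R : Finset Q, IsTrap T (suppIn T x) R → (∀ q ∈ R, q ∉ C') →
    preSetOf T R ∩ suppIn T x = ∅) ∧
  (∀ R : Finset Q, IsSiphon T (suppIn T x) R → (∀ q ∈ R, q ∉ C) →
    postSetOf T R ∩ suppIn T x = ∅)

/-- StrongConsensus: all terminal configurations potentially reachable from an initial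
configuration are consensus configurations with one common output. -/
def StrongConsensus (P : Protocol Q A) : Prop :=
  ∀ X : Multiset A, 2 ≤ Multiset.card X → ∃ b : Bool,
    ∀ (C' : Multiset Q) (x : PTrans Q → ℕ),
      PotReach P.T (init P X) C' x → Terminal P.T C' → Consensus P.out C' b

/-- `C` is `U`-dead: no transition of `U` can change `C`. -/
def UDeadConf (U : Finset (PTrans Q)) (C : Multiset Q) : Prop :=
  ∀ t ∈ U, ∀ C' : Multiset Q, StepBy t C C' → C' = C

/-- The protocol with transitions `T` is `U`-dead: from every `U`-dead configuration,
every reachable configuration is `U`-dead. -/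
def UDead (T U : Finset (PTrans Q)) : Prop :=
  ∀ C₀ : Multiset Q, 2 ≤ Multiset.card C₀ → UDeadConf U C₀ →
    ∀ C : Multiset Q, Reach T C₀ C → UDeadConf U C

end PopProt
namespace PopProt

section Remainder

variable (k m : ℕ) [NeZero m] (a : Fin k → ℤ) (c : ℤ)

/-- States of the remainder protocol: numerical states `0, …, m-1`
plus the two boolean states `false` and `true`. -/
abbrev Qrmd := Fin m ⊕ Bool

open Fin.NatCast in
/-- The value `c` as a numerical state (assuming `0 ≤ c < m`). -/
def cF : Fin m := (c.toNat : Fin m)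

/-- Non-silent transitions of the remainder protocol:
`(n, n') ↦ ((n + n') mod m, [(n + n') mod m = c])` and `(n, b) ↦ (n, [n = c])`. -/
def IsRmdTrans (t : PTrans (Qrmd m)) : Prop :=
  (∃ n n' : Fin m,
    t = (Sum.inl n, Sum.inl n', Sum.inl (n + n'), Sum.inr (decide (n + n' = cF m c)))) ∨
  (∃ (n : Fin m) (b : Bool),
    t = (Sum.inl n, Sum.inr b, Sum.inl n, Sum.inr (decide (n = cF m c))))

instance : DecidablePred (IsRmdTrans m c) := fun t => by
  unfold IsRmdTrans; infer_instance

/-- Transition set of the remainder protocol. -/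
def Trmd : Finset (PTrans (Qrmd m)) :=
  Finset.univ.filter fun t => IsRmdTrans m c t ∨ IsSilentPair t

open Fin.NatCast in
/-- The remainder protocol `P_rmd` computing `a₁x₁ + ⋯ + a_kx_k ≡ c (mod m)`. -/
def Prmd : Protocol (Qrmd m) (Fin k) where
  T := Trmd m c
  total := fun p q => ⟨p, q, by
    simp only [Trmd, Finset.mem_filter, Finset.mem_univ, true_and]
    exact Or.inr ⟨p, q, rfl⟩⟩
  inp := fun i => Sum.inl (((a i % (m : ℤ)).toNat : Fin m))
  out := fun q => match q with
    | Sum.inl n => decide (n = cF m c)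
    | Sum.inr b => b

/-- `T₁ = {t ∈ T : pre t = ⟦q, r⟧ for some q ∈ [0, m), r ∈ [0, m) ∪ {false}}`. -/
def T1rmd : Finset (PTrans (Qrmd m)) :=
  (Trmd m c).filter fun t => ∃ (q : Fin m) (r : Qrmd m),
    ((∃ n : Fin m, r = Sum.inl n) ∨ r = Sum.inr false) ∧ pre t = {Sum.inl q, r}

/-- `T₂ = {t ∈ T : pre t = ⟦q, true⟧ for some q ∈ [0, m)}`. -/
def T2rmd : Finset (PTrans (Qrmd m)) :=
  (Trmd m c).filter fun t => ∃ q : Fin m, pre t = {Sum.inl q, Sum.inr true}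

end Remainder

end PopProt

/-!
Give a numerical state its value in `Fin m` (addition mod `m`) and a boolean state the value `0`:
every transition preserves the total value, hence so does every solution of the flow equations.
The numerical states form a trap that the initial configuration marks, so a potentially reachable
configuration still holds some numerical state `n`. If it is also terminal, it holds no second
numerical state and no boolean other than `[n = c]`; its output is therefore `[n = c]`, where `n`
is the total value of the input.
-/

namespace PopProt

section Invariants

variable {Q : Type*} [DecidableEq Q]

theorem sum_map_eq_sum_count_nsmul [Fintype Q] {M : Type*} [AddCommMonoid M] (C : Multiset Q)
    (f : Q → M) :
    (C.map f).sum = ∑ q, C.count q • f q := by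
  rw [Finset.sum_multiset_map_count]
  refine Finset.sum_subset (Finset.subset_univ _) fun q _ hq => ?_
  rw [Multiset.count_eq_zero.2 (by simpa using hq), zero_smul]

theorem FlowEq.sum_map_eq [Fintype Q] {M : Type*} [AddCommGroup M] {T : Finset (PTrans Q)}
    {C C' : Multiset Q} {x : PTrans Q → ℕ} (h : FlowEq T C C' x) (f : Q → M)
    (hf : ∀ t ∈ T, x t ≠ 0 → ((post t).map f).sum = ((pre t).map f).sum) :
    (C'.map f).sum = (C.map f).sum := by
  have hterm : ∀ t ∈ T, (x t : ℤ) • (((post t).map f).sum - ((pre t).map f).sum) = 0 := by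
    intro t ht
    by_cases hx : x t = 0
    · simp [hx]
    · rw [hf t ht hx, sub_self, smul_zero]
  calc (C'.map f).sum
      = ∑ q, ((C.count q : ℤ) • f q + ∑ t ∈ T, (x t : ℤ) •
          (((post t).count q : ℤ) • f q - ((pre t).count q : ℤ) • f q)) := by
        rw [sum_map_eq_sum_count_nsmul]
        refine Finset.sum_congr rfl fun q _ => ?_
        rw [← natCast_zsmul, h q, add_smul, Finset.sum_smul]
        simp only [mul_smul, sub_smul]
    _ = (C.map f).sum +
          ∑ t ∈ T, (x t : ℤ) • (((post t).map f).sum - ((pre t).map f).sum) := by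
        simp only [Finset.sum_add_distrib, sum_map_eq_sum_count_nsmul, ← natCast_zsmul]
        rw [Finset.sum_comm]
        simp only [← Finset.smul_sum, Finset.sum_sub_distrib]
    _ = (C.map f).sum := by rw [Finset.sum_eq_zero hterm, add_zero]

theorem PotReach.notMem_of_isTrap {T : Finset (PTrans Q)} {C C' : Multiset Q}
    {x : PTrans Q → ℕ} (h : PotReach T C C' x) {R : Finset Q} (hR : IsTrap T (suppIn T x) R)
    (hC' : ∀ q ∈ R, q ∉ C') : ∀ q ∈ R, q ∉ C := by
  have hempty := h.2.1 R hR hC'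
  intro q hq
  have hfix :
      ∀ t ∈ T, (x t : ℤ) * (((post t).count q : ℤ) - ((pre t).count q : ℤ)) = 0 := by
    intro t ht
    by_cases hx : x t = 0
    · simp [hx]
    have hsupp : t ∈ suppIn T x := Finset.mem_filter.2 ⟨ht, hx⟩
    have hout : t ∉ preSetOf T R := fun hmem =>
      Finset.notMem_empty t (hempty ▸ Finset.mem_inter.2 ⟨hmem, hsupp⟩)
    have hin : t ∉ postSetOf T R := fun hmem => hout (hR (Finset.mem_inter.2 ⟨hmem, hsupp⟩))
    rw [Multiset.count_eq_zero.2 fun hq' => hout (Finset.mem_filter.2 ⟨ht, q, hq, hq'⟩),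
      Multiset.count_eq_zero.2 fun hq' => hin (Finset.mem_filter.2 ⟨ht, q, hq, hq'⟩)]
    simp
  have hflow := h.1 q
  rw [Finset.sum_eq_zero hfix, Multiset.count_eq_zero.2 (hC' q hq)] at hflow
  exact Multiset.count_eq_zero.1 (by omega)

end Invariants

section Remainder

variable {m : ℕ} [NeZero m] {c : ℤ}

def stateValue : Qrmd m → Fin m := Sum.elim id 0

def numStates : Finset (Qrmd m) := Finset.univ.map .inl

theorem mem_Trmd {t : PTrans (Qrmd m)} :
    t ∈ Trmd m c ↔ IsRmdTrans m c t ∨ IsSilentPair t := by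
  simp [Trmd]

theorem sum_map_stateValue_post {t : PTrans (Qrmd m)} (ht : t ∈ Trmd m c) :
    ((post t).map stateValue).sum = ((pre t).map stateValue).sum := by
  rcases mem_Trmd.1 ht with (⟨n, n', rfl⟩ | ⟨n, b, rfl⟩) | ⟨p, q, rfl⟩ <;>
    simp [pre, post, stateValue]

theorem isTrap_numStates (U : Finset (PTrans (Qrmd m))) : IsTrap (Trmd m c) U numStates := by
  intro t ht
  obtain ⟨htT, q, hq, hqpre⟩ := Finset.mem_filter.1 (Finset.mem_inter.1 ht).1
  refine Finset.mem_filter.2 ⟨htT, ?_⟩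
  rcases mem_Trmd.1 htT with (⟨n, n', rfl⟩ | ⟨n, b, rfl⟩) | ⟨p, q', rfl⟩
  · exact ⟨.inl (n + n'), by simp [numStates], by simp [post]⟩
  · exact ⟨.inl n, by simp [numStates], by simp [post]⟩
  · exact ⟨q, hq, hqpre⟩

theorem Terminal.eq_of_mem_erase {C : Multiset (Qrmd m)} (hC : Terminal (Trmd m c) C)
    {n : Fin m} (hn : .inl n ∈ C) {q : Qrmd m} (hq : q ∈ C.erase (.inl n)) :
    q = .inr (decide (n = cF m c)) := by
  have hle : ({.inl n, q} : Multiset (Qrmd m)) ≤ C := by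
    rw [← Multiset.cons_erase hn]
    exact Multiset.cons_le_cons _ (Multiset.singleton_le.2 hq)
  cases q with
  | inl n' =>
    have hsilent := hC (.inl n, .inl n', .inl (n + n'), .inr (decide (n + n' = cF m c)))
      (mem_Trmd.2 (.inl (.inl ⟨n, n', rfl⟩))) hle
    have hmem := congrArg (Sum.inr (decide (n + n' = cF m c)) ∈ ·) hsilent
    simp [pre, post] at hmem
  | inr b =>
    have hsilent := hC (.inl n, .inr b, .inl n, .inr (decide (n = cF m c)))
      (mem_Trmd.2 (.inl (.inr ⟨n, b, rfl⟩))) hle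
    simpa [SilentT, pre, post] using hsilent

theorem Terminal.eq_cons_replicate {C : Multiset (Qrmd m)} (hC : Terminal (Trmd m c) C)
    {n : Fin m} (hn : .inl n ∈ C) :
    C = .inl n ::ₘ Multiset.replicate (C.erase (.inl n)).card (.inr (decide (n = cF m c))) := by
  rw [← Multiset.eq_replicate_of_mem fun q hq => hC.eq_of_mem_erase hn hq, Multiset.cons_erase hn]

end Remainder

end PopProt

open PopProt in
theorem remainder_strongConsensus_general
    (k m : ℕ) [NeZero m] (a : Fin k → ℤ) (c : ℤ) :
    StrongConsensus (Prmd k m a c) := by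
  intro X hX
  set C := init (Prmd k m a c) X
  refine ⟨decide ((C.map stateValue).sum = cF m c), fun C' x hreach hterm => ?_⟩
  obtain ⟨σ, hσ⟩ := Multiset.card_pos_iff_exists_mem.1 (by omega : 0 < X.card)
  obtain ⟨n, hn⟩ : ∃ n, .inl n ∈ C' := by
    by_contra! h
    refine hreach.notMem_of_isTrap (isTrap_numStates _) (by simpa [numStates] using h) _ ?_
      (Multiset.mem_map_of_mem _ hσ)
    simp [numStates, Prmd]
  have hC' := hterm.eq_cons_replicate hn
  have hvalue : n = (C.map stateValue).sum := by
    rw [← hreach.1.sum_map_eq stateValue fun t ht _ => sum_map_stateValue_post ht, hC']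
    simp [stateValue]
  intro q hq
  rw [hC', Multiset.mem_cons] at hq
  rcases hq with rfl | hq
  · simp [Prmd, hvalue]
  · rw [Multiset.eq_of_mem_replicate hq]
    simp [Prmd, hvalue]

open PopProt in
/-- Proposition: the remainder protocol `P_rmd` satisfies StrongConsensus. -/
theorem remainder_strongConsensus
    (k m : ℕ) [NeZero m] (a : Fin k → ℤ) (c : ℤ)
    (hk : 1 ≤ k) (hm : 2 ≤ m) (hc0 : 0 ≤ c) (hc1 : c < m) :
    StrongConsensus (Prmd k m a c) :=
  remainder_strongConsensus_general k m a c
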